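/- The subgroup Γ₁(4) ∩ Γ(2) of SL(2, ℤ) is generated by the three matrices g₁ = [[1, 2], [0, 1]], g₂ = [[1, 0], [4, 1]], and g₃ = [[−3, 2], [4, −3]]. -/

import Mathlib

/-
Descent on the lower-left entry `c` of `M = [[a, b], [c, d]] ∈ Γ₁(4) ∩ Γ(2)`. If `c = 0` then
`a = d = 1` and `M = g₁ ^ (b / 2)`. Otherwise left multiplication by a power of `g₁` replaces `a`
by `a + 2kc`, which brings `|a|` below `|c|` because `a` is odd and `c` is even. Then `g₂^{±1}`
(if `2|a| < |c|`) or `g₃^{±1}` (if `|a| < |c| < 2|a|`) strictly decreases `|c|`.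
-/

open Matrix CongruenceSubgroup

def g1 : Matrix.SpecialLinearGroup (Fin 2) ℤ :=
  ⟨!![1, 2; 0, 1], by norm_num [Matrix.det_fin_two_of]⟩

def g2 : Matrix.SpecialLinearGroup (Fin 2) ℤ :=
  ⟨!![1, 0; 4, 1], by norm_num [Matrix.det_fin_two_of]⟩

def g3 : Matrix.SpecialLinearGroup (Fin 2) ℤ :=
  ⟨!![-3, 2; 4, -3], by norm_num [Matrix.det_fin_two_of]⟩

open MatrixGroups ModularGroup Matrix.SpecialLinearGroup

lemma exists_natAbs_add_two_mul_mul_lt (a c : ℤ) (ha : a % 2 = 1) (hc : c % 2 = 0) (hc0 : c ≠ 0) :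
    ∃ k, (a + 2 * k * c).natAbs < c.natAbs := by
  have h2c : 2 * c ≠ 0 := by omega
  have hr := Int.emod_add_mul_ediv a (2 * c)
  have hr0 := Int.emod_nonneg a h2c
  have hr1 := Int.emod_lt a h2c
  generalize a % (2 * c) = r at *
  generalize a / (2 * c) = q at *
  subst hr
  rw [mul_assoc, Int.add_mul_emod_self_left] at ha
  have shift (j : ℤ) : r + 2 * c * q + 2 * (j - q) * c = r + 2 * j * c := by ring
  by_cases hsmall : r < c.natAbs
  · exact ⟨0 - q, by rw [shift]; omega⟩
  · rcases hc0.lt_or_gt with hneg | hpos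
    · exact ⟨1 - q, by rw [shift]; omega⟩
    · exact ⟨-1 - q, by rw [shift]; omega⟩

/-- The last two alternatives cover `|a| < |c| < 2|a|`; `|c| = 2|a|` cannot occur since `4 ∣ c`
and `a` is odd. -/
lemma natAbs_four_mul_add_lt_or_four_mul_sub_three_mul_lt (a c : ℤ) (ha : a % 2 = 1)
    (hc : c % 4 = 0) (h : a.natAbs < c.natAbs) :
    (4 * a + c).natAbs < c.natAbs ∨ (-4 * a + c).natAbs < c.natAbs ∨
      (4 * a - 3 * c).natAbs < c.natAbs ∨ (-4 * a - 3 * c).natAbs < c.natAbs := by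
  omega

lemma Matrix.SpecialLinearGroup.mul_apply_fin_two {R : Type*} [CommRing R] (A M : SL(2, R))
    (i j : Fin 2) : (A * M) i j = A i 0 * M 0 j + A i 1 * M 1 j := by
  simp [Matrix.mul_apply, Fin.sum_univ_two]

lemma g1_eq_T_sq : g1 = T ^ 2 := by decide

lemma coe_g1_zpow (k : ℤ) :
    ((g1 ^ k : SL(2, ℤ)) : Matrix (Fin 2) (Fin 2) ℤ) = !![1, 2 * k; 0, 1] := by
  rw [g1_eq_T_sq, ← zpow_natCast, ← _root_.zpow_mul, coe_T_zpow]
  norm_num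

lemma coe_g2_inv : ((g2⁻¹ : SL(2, ℤ)) : Matrix (Fin 2) (Fin 2) ℤ) = !![1, 0; -4, 1] := by
  rw [coe_inv]; decide

lemma coe_g3_inv : ((g3⁻¹ : SL(2, ℤ)) : Matrix (Fin 2) (Fin 2) ℤ) = !![-3, -2; -4, -3] := by
  rw [coe_inv]; decide

section Entries

variable (M : SL(2, ℤ))

lemma g1_zpow_mul_apply_zero_zero (k : ℤ) : (g1 ^ k * M) 0 0 = M 0 0 + 2 * k * M 1 0 := by
  simp [mul_apply_fin_two, coe_g1_zpow]

lemma g1_zpow_mul_apply_one_zero (k : ℤ) : (g1 ^ k * M) 1 0 = M 1 0 := by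
  simp [mul_apply_fin_two, coe_g1_zpow]

lemma g2_mul_apply_one_zero : (g2 * M) 1 0 = 4 * M 0 0 + M 1 0 := by
  rw [mul_apply_fin_two]; simp [g2]

lemma g2_inv_mul_apply_one_zero : (g2⁻¹ * M) 1 0 = -4 * M 0 0 + M 1 0 := by
  rw [mul_apply_fin_two, coe_g2_inv]; simp

lemma g3_mul_apply_one_zero : (g3 * M) 1 0 = 4 * M 0 0 - 3 * M 1 0 := by
  rw [mul_apply_fin_two]
  simp only [g3, of_apply, cons_val', cons_val_zero, cons_val_one, cons_val_fin_one]
  ring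

lemma g3_inv_mul_apply_one_zero : (g3⁻¹ * M) 1 0 = -4 * M 0 0 - 3 * M 1 0 := by
  rw [mul_apply_fin_two, coe_g3_inv]
  simp only [of_apply, cons_val', cons_val_zero, cons_val_one, cons_val_fin_one]
  ring

end Entries

lemma mem_Gamma1_four_inf_Gamma_two_iff (M : SL(2, ℤ)) :
    M ∈ Gamma1 4 ⊓ Gamma 2 ↔ M 0 0 % 4 = 1 ∧ M 1 1 % 4 = 1 ∧ M 1 0 % 4 = 0 ∧ M 0 1 % 2 = 0 := by
  simp only [Subgroup.mem_inf, Gamma1_mem, Gamma_mem, ← Int.cast_one (R := ZMod _),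
    ← Int.cast_zero (R := ZMod _), ZMod.intCast_eq_intCast_iff']
  omega

lemma closure_le_Gamma1_four_inf_Gamma_two :
    Subgroup.closure {g1, g2, g3} ≤ Gamma1 4 ⊓ Gamma 2 := by
  rw [Subgroup.closure_le]
  rintro _ (rfl | rfl | rfl) <;> exact (mem_Gamma1_four_inf_Gamma_two_iff _).2 (by decide)

lemma eq_g1_zpow_of_apply_one_zero_eq_zero {M : SL(2, ℤ)} (hM : M ∈ Gamma1 4 ⊓ Gamma 2)
    (hc : M 1 0 = 0) : M = g1 ^ (M 0 1 / 2) := by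
  obtain ⟨ha, -, -, hb⟩ := (mem_Gamma1_four_inf_Gamma_two_iff M).1 hM
  have hdet := M.det_coe
  rw [Matrix.det_fin_two, hc, mul_zero, sub_zero] at hdet
  have ha1 : M 0 0 = 1 := by
    rcases Int.eq_one_or_neg_one_of_mul_eq_one hdet with h | h <;> omega
  have hd1 : M 1 1 = 1 := by simpa [ha1] using hdet
  have hb2 : 2 * (M 0 1 / 2) = M 0 1 := by omega
  ext i j
  fin_cases i <;> fin_cases j <;> simp [coe_g1_zpow, ha1, hd1, hc, hb2]

lemma exists_mem_closure_natAbs_mul_apply_one_zero_lt {M : SL(2, ℤ)}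
    (hM : M ∈ Gamma1 4 ⊓ Gamma 2) (hc : M 1 0 ≠ 0) :
    ∃ g ∈ Subgroup.closure {g1, g2, g3}, ((g * M) 1 0).natAbs < (M 1 0).natAbs := by
  have mem {g} (hg : g ∈ ({g1, g2, g3} : Set SL(2, ℤ))) : g ∈ Subgroup.closure {g1, g2, g3} :=
    Subgroup.subset_closure hg
  obtain ⟨ha, -, hc4, -⟩ := (mem_Gamma1_four_inf_Gamma_two_iff M).1 hM
  obtain ⟨k, hk⟩ := exists_natAbs_add_two_mul_mul_lt (M 0 0) (M 1 0) (by omega) (by omega) hc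
  set N := g1 ^ k * M
  have hN0 : N 0 0 = M 0 0 + 2 * k * M 1 0 := g1_zpow_mul_apply_zero_zero M k
  have hN1 : N 1 0 = M 1 0 := g1_zpow_mul_apply_one_zero M k
  suffices ∃ g ∈ Subgroup.closure {g1, g2, g3}, ((g * N) 1 0).natAbs < (N 1 0).natAbs by
    obtain ⟨g, hg, hlt⟩ := this
    exact ⟨g * g1 ^ k, mul_mem hg (zpow_mem (mem (by simp)) k), by rwa [mul_assoc, ← hN1]⟩
  rcases natAbs_four_mul_add_lt_or_four_mul_sub_three_mul_lt (N 0 0) (N 1 0)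
    (by rw [hN0, mul_assoc, Int.add_mul_emod_self_left]; omega) (by omega) (by rwa [hN0, hN1])
    with h | h | h | h
  · exact ⟨g2, mem (by simp), by rwa [g2_mul_apply_one_zero]⟩
  · exact ⟨g2⁻¹, inv_mem (mem (by simp)), by rwa [g2_inv_mul_apply_one_zero]⟩
  · exact ⟨g3, mem (by simp), by rwa [g3_mul_apply_one_zero]⟩
  · exact ⟨g3⁻¹, inv_mem (mem (by simp)), by rwa [g3_inv_mul_apply_one_zero]⟩

/-- The subgroup `Γ₁(4) ∩ Γ(2)` of `SL(2, ℤ)` is generated by `g₁`, `g₂` and `g₃`. -/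
theorem gamma1_four_inter_gamma_two_generators :
    Subgroup.closure {g1, g2, g3} = Gamma1 4 ⊓ Gamma 2 := by
  refine le_antisymm closure_le_Gamma1_four_inf_Gamma_two fun M hM => ?_
  induction h : (M 1 0).natAbs using Nat.strong_induction_on generalizing M with
  | _ n ih =>
  by_cases hc : M 1 0 = 0
  · rw [eq_g1_zpow_of_apply_one_zero_eq_zero hM hc]
    exact zpow_mem (Subgroup.subset_closure (by simp)) _
  · obtain ⟨g, hg, hlt⟩ := exists_mem_closure_natAbs_mul_apply_one_zero_lt hM hc
    have hgM := ih _ (h ▸ hlt) _ (mul_mem (closure_le_Gamma1_four_inf_Gamma_two hg) hM) rfl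
    exact (Subgroup.mul_mem_cancel_left _ hg).1 hgM
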